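/- Let H_{[0,N]} be a Jacobi matrix with eigenvalues λ_0 < ... < λ_N and associated orthonormal denominator polynomials P̂_k. Then the condition P̂_N(λ_k) = (−1)^{N+k} for all k = 0, ..., N holds if and only if H_{[0,N]} is persymmetric (mirror symmetric), i.e., a_k = a_{N−k} for all k and b_n = b_{N−1−n} for all n; equivalently H_{[0,N]} = R H_{[0,N]} R where R is the reversal (antidiagonal permutation) matrix. -/

import Mathlib

open Polynomial

/-- The orthonormal polynomials `P̂_k`:
    `P̂_{-1} = 0`, `P̂_0 = 1`, `b_k P̂_{k+1}(x) = (x - a_k) P̂_k(x) - b_{k-1} P̂_{k-1}(x)`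
    with `b_{-1} = 1`. -/
noncomputable def phat (a b : ℕ → ℝ) : ℕ → Polynomial ℝ
  | 0 => 1
  | 1 => C (b 0)⁻¹ * (X - C (a 0))
  | (k + 2) => C (b (k + 1))⁻¹ *
      ((X - C (a (k + 1))) * phat a b (k + 1) - C (b k) * phat a b k)

/-!
Normalizing the eigenvectors `(P̂_0(λ_k), …, P̂_N(λ_k))` of `H` by the Christoffel–Darboux kernel
`K(λ_k, λ_k) = ∑_j P̂_j(λ_k)²` gives an orthogonal matrix, so its columns
`p_j = (P̂_j(λ_k) / √K(λ_k, λ_k))_k` are orthonormal; they solve the three-term recurrence of `H`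
with `T = diag λ`. With `s_k = P̂_N(λ_k)`, reading the recurrence backwards shows that
`q_j = (s_k p_{N-j}(k))_k` solves the recurrence of `R H R`, and if `s_k² = 1` the `q_j` are
orthonormal as well and `q_0 = p_0`. Two orthonormal solutions with positive off-diagonals and the
same start coincide: inductively, `a_j = ⟪p_j, T p_j⟫` and `b_{j-1} = ⟪p_j, T p_{j-1}⟫` are read
off from `p_{j-1}, p_j`, this fixes `b_j p_{j+1}`, and a positive multiple of a unit vector
determines both factors. Hence the coefficients agree too, i.e. `H = R H R`.
Conversely, if `H = R H R`, then at a zero `x` of `P̂_{N+1}` both `P̂_{N-j}(x)` and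
`P̂_N(x) P̂_j(x)` solve the recurrence of `H` with the same start, so `P̂_N(x)² = 1`.
The sign of `P̂_N(λ_k)` is `(-1)^{N-k}` because `b_N P̂'_{N+1}(λ_k) P̂_N(λ_k) = K(λ_k, λ_k) > 0`
(confluent Christoffel–Darboux) and `P̂'_{N+1}(λ_k)` has the sign of `∏_{j ≠ k} (λ_k - λ_j)`.
-/

open Finset
open scoped RealInnerProductSpace

section Module

variable {E : Type*} [AddCommGroup E] [Module ℝ E]

/-- Rows `0, …, n - 1` of `H p = T p` for the Jacobi matrix `H` with diagonal `a` and
off-diagonal `b`; row `0` has no `p (-1)` term. -/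
def IsJacobiSolution (T : E → E) (a b : ℕ → ℝ) (n : ℕ) (p : ℕ → E) : Prop :=
  (0 < n → b 0 • p 1 = T (p 0) - a 0 • p 0) ∧
    ∀ j, j + 1 < n →
      b (j + 1) • p (j + 2) = T (p (j + 1)) - a (j + 1) • p (j + 1) - b j • p j

namespace IsJacobiSolution

variable {T : E → E} {a b a' b' : ℕ → ℝ} {n : ℕ} {p q : ℕ → E}

theorem mono (h : IsJacobiSolution T a b n p) {m : ℕ} (hm : m ≤ n) :
    IsJacobiSolution T a b m p :=
  ⟨fun hm0 => h.1 (by omega), fun j hj => h.2 j (by omega)⟩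

theorem congr_coeff (h : IsJacobiSolution T a b n p) (ha : ∀ j < n, a j = a' j)
    (hb : ∀ j < n, b j = b' j) : IsJacobiSolution T a' b' n p := by
  refine ⟨fun hn => ?_, fun j hj => ?_⟩
  · rw [← ha 0 hn, ← hb 0 hn]
    exact h.1 hn
  · rw [← ha (j + 1) hj, ← hb (j + 1) hj, ← hb j (by omega)]
    exact h.2 j hj

theorem eq_of_apply_zero_eq (hp : IsJacobiSolution T a b n p) (hq : IsJacobiSolution T a b n q)
    (hb : ∀ j < n, b j ≠ 0) (h0 : p 0 = q 0) : ∀ j ≤ n, p j = q j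
  | 0, _ => h0
  | 1, hj => smul_right_injective E (hb 0 hj) <| by
      simp only [hp.1 hj, hq.1 hj, h0]
  | j + 2, hj => smul_right_injective E (hb (j + 1) hj) <| by
      simp only [hp.2 j hj, hq.2 j hj, eq_of_apply_zero_eq hp hq hb h0 j (by omega),
        eq_of_apply_zero_eq hp hq hb h0 (j + 1) (by omega)]

theorem reverse {N : ℕ} (h : IsJacobiSolution T a b (N + 1) p) (hN : p (N + 1) = 0) :
    IsJacobiSolution T (fun j => a (N - j)) (fun j => b (N - 1 - j)) N fun j => p (N - j) := by
  refine ⟨fun hN0 => ?_, fun j hj => ?_⟩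
  · obtain ⟨m, rfl⟩ : ∃ m, N = m + 1 := ⟨N - 1, by omega⟩
    have hrow := h.2 m (by omega)
    rw [hN, smul_zero, eq_comm, sub_eq_zero] at hrow
    simpa using hrow.symm
  · obtain ⟨m, rfl⟩ : ∃ m, N = j + m + 2 := ⟨N - j - 2, by omega⟩
    have hrow := h.2 m (by omega)
    simp only [show j + m + 2 - 1 - (j + 1) = m by omega, show j + m + 2 - (j + 2) = m by omega,
      show j + m + 2 - (j + 1) = m + 1 by omega, show j + m + 2 - 1 - j = m + 1 by omega,
      show j + m + 2 - j = m + 2 by omega]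
    rw [hrow]
    abel

end IsJacobiSolution

end Module

section InnerProduct

variable {E : Type*} [NormedAddCommGroup E] [InnerProductSpace ℝ E]
  {T : E → E} {a b a' b' : ℕ → ℝ} {n : ℕ} {p q : ℕ → E}

theorem inner_eq_ite_of_orthonormal (hp : Orthonormal ℝ fun i : Fin (n + 1) => p i) {i j : ℕ}
    (hi : i ≤ n) (hj : j ≤ n) : ⟪p i, p j⟫ = if i = j then 1 else 0 := by
  simpa [Fin.ext_iff] using orthonormal_iff_ite.mp hp ⟨i, by omega⟩ ⟨j, by omega⟩

namespace IsJacobiSolution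

theorem diag_eq_inner (h : IsJacobiSolution T a b n p)
    (hp : Orthonormal ℝ fun i : Fin (n + 1) => p i) {j : ℕ} (hj : j < n) :
    a j = ⟪p j, T (p j)⟫ := by
  have hip {i k : ℕ} (hi : i ≤ n) (hk : k ≤ n) := inner_eq_ite_of_orthonormal hp hi hk
  rcases j with _ | j
  · have hrow := congrArg (⟪p 0, ·⟫) (h.1 hj)
    simp only [inner_smul_right, inner_sub_right, hip (i := 0) (k := 1) (by omega) hj,
      hip (i := 0) (k := 0) (by omega) (by omega)] at hrow
    norm_num at hrow
    linarith
  · have hrow := congrArg (⟪p (j + 1), ·⟫) (h.2 j hj)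
    simp only [inner_smul_right, inner_sub_right, hip (i := j + 1) (k := j + 2) (by omega) hj,
      hip (i := j + 1) (k := j + 1) (by omega) (by omega),
      hip (i := j + 1) (k := j) (by omega) (by omega)] at hrow
    norm_num at hrow
    linarith

theorem offDiag_eq_inner (h : IsJacobiSolution T a b n p)
    (hp : Orthonormal ℝ fun i : Fin (n + 1) => p i) {j : ℕ} (hj : j < n) :
    b j = ⟪p (j + 1), T (p j)⟫ := by
  have hip {i k : ℕ} (hi : i ≤ n) (hk : k ≤ n) := inner_eq_ite_of_orthonormal hp hi hk
  rcases j with _ | j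
  · have hrow := congrArg (⟪p 1, ·⟫) (h.1 hj)
    simp only [inner_smul_right, inner_sub_right, hip (i := 1) (k := 1) hj hj,
      hip (i := 1) (k := 0) hj (by omega)] at hrow
    norm_num at hrow
    linarith
  · have hrow := congrArg (⟪p (j + 2), ·⟫) (h.2 j hj)
    simp only [inner_smul_right, inner_sub_right, hip (i := j + 2) (k := j + 2) hj hj,
      hip (i := j + 2) (k := j + 1) hj (by omega), hip (i := j + 2) (k := j) hj (by omega)] at hrow
    norm_num at hrow
    linarith

theorem eq_of_orthonormal (hp : IsJacobiSolution T a b n p) (hq : IsJacobiSolution T a' b' n q)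
    (hpo : Orthonormal ℝ fun i : Fin (n + 1) => p i)
    (hqo : Orthonormal ℝ fun i : Fin (n + 1) => q i)
    (hb : ∀ j < n, 0 < b j) (hb' : ∀ j < n, 0 < b' j) (h0 : p 0 = q 0) : ∀ j ≤ n, p j = q j
  | 0, _ => h0
  | 1, hj => by
      have ha : a 0 = a' 0 := by
        rw [hp.diag_eq_inner hpo hj, hq.diag_eq_inner hqo hj, h0]
      refine SameRay.eq_of_norm_eq (.inr <| .inr ⟨b 0, b' 0, hb 0 hj, hb' 0 hj, ?_⟩) ?_
      · rw [hp.1 hj, hq.1 hj, h0, ha]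
      · rw [hpo.norm_eq_one ⟨1, by omega⟩, hqo.norm_eq_one ⟨1, by omega⟩]
  | j + 2, hj => by
      have ih₀ := eq_of_orthonormal hp hq hpo hqo hb hb' h0 j (by omega)
      have ih₁ := eq_of_orthonormal hp hq hpo hqo hb hb' h0 (j + 1) (by omega)
      have ha : a (j + 1) = a' (j + 1) := by
        rw [hp.diag_eq_inner hpo hj, hq.diag_eq_inner hqo hj, ih₁]
      have hbj : b j = b' j := by
        rw [hp.offDiag_eq_inner hpo (by omega), hq.offDiag_eq_inner hqo (by omega), ih₀, ih₁]
      refine SameRay.eq_of_norm_eq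
        (.inr <| .inr ⟨b (j + 1), b' (j + 1), hb (j + 1) hj, hb' (j + 1) hj, ?_⟩) ?_
      · rw [hp.2 j hj, hq.2 j hj, ih₀, ih₁, ha, hbj]
      · rw [hpo.norm_eq_one ⟨j + 2, by omega⟩, hqo.norm_eq_one ⟨j + 2, by omega⟩]

theorem coeff_eq_of_orthonormal (hp : IsJacobiSolution T a b n p)
    (hq : IsJacobiSolution T a' b' n q) (hpo : Orthonormal ℝ fun i : Fin (n + 1) => p i)
    (hqo : Orthonormal ℝ fun i : Fin (n + 1) => q i)
    (hb : ∀ j < n, 0 < b j) (hb' : ∀ j < n, 0 < b' j) (h0 : p 0 = q 0) :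
    (∀ j < n, a j = a' j) ∧ ∀ j < n, b j = b' j := by
  have hpq := hp.eq_of_orthonormal hq hpo hqo hb hb' h0
  refine ⟨fun j hj => ?_, fun j hj => ?_⟩
  · rw [hp.diag_eq_inner hpo hj, hq.diag_eq_inner hqo hj, hpq j hj.le]
  · rw [hp.offDiag_eq_inner hpo hj, hq.offDiag_eq_inner hqo hj, hpq j hj.le, hpq (j + 1) hj]

end IsJacobiSolution

theorem isJacobiSolution_toLp {ι : Type*} {lam : ι → ℝ} {f : ℕ → ι → ℝ}
    (h : ∀ k, IsJacobiSolution (lam k * ·) a b n fun j => f j k) :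
    IsJacobiSolution (fun v : EuclideanSpace ℝ ι => WithLp.toLp 2 fun k => lam k * v k) a b n
      fun j => WithLp.toLp 2 (f j) := by
  refine ⟨fun hn => ?_, fun j hj => ?_⟩ <;> ext k
  · simpa using (h k).1 hn
  · simpa using (h k).2 j hj

theorem orthonormal_toLp_iff {ι κ : Type*} [Fintype κ] [DecidableEq ι] {f : ι → κ → ℝ} :
    (Orthonormal ℝ fun i => WithLp.toLp 2 (f i)) ↔
      ∀ i j, ∑ k, f i k * f j k = if i = j then 1 else 0 := by
  simp [orthonormal_iff_ite, EuclideanSpace.inner_toLp_toLp, dotProduct, mul_comm]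

end InnerProduct

section Scalar

variable {a b : ℕ → ℝ} {n : ℕ} {x y : ℝ} {u v : ℕ → ℝ}

theorem IsJacobiSolution.const_mul (h : IsJacobiSolution (x * ·) a b n u) (c : ℝ) :
    IsJacobiSolution (x * ·) a b n fun j => c * u j := by
  refine ⟨fun hn => ?_, fun j hj => ?_⟩
  · have hrow := h.1 hn
    simp only [smul_eq_mul] at hrow ⊢
    linear_combination c * hrow
  · have hrow := h.2 j hj
    simp only [smul_eq_mul] at hrow ⊢
    linear_combination c * hrow

theorem IsJacobiSolution.sub_mul_sum_mul (hu : IsJacobiSolution (x * ·) a b (n + 1) u)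
    (hv : IsJacobiSolution (y * ·) a b (n + 1) v) :
    (x - y) * ∑ j ∈ range (n + 1), u j * v j = b n * (u (n + 1) * v n - u n * v (n + 1)) := by
  induction n with
  | zero =>
    have hu0 := hu.1 one_pos
    have hv0 := hv.1 one_pos
    simp only [smul_eq_mul] at hu0 hv0
    simp only [zero_add, range_one, sum_singleton]
    linear_combination u 0 * hv0 - v 0 * hu0
  | succ n ih =>
    have hu1 := hu.2 n (by omega)
    have hv1 := hv.2 n (by omega)
    simp only [smul_eq_mul] at hu1 hv1
    rw [sum_range_succ, mul_add, ih (hu.mono (by omega)) (hv.mono (by omega))]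
    linear_combination u (n + 1) * hv1 - v (n + 1) * hu1

end Scalar

section Phat

variable {a b : ℕ → ℝ} {n N : ℕ}

@[simp]
theorem phat_zero : phat a b 0 = 1 := rfl

theorem C_mul_phat_one (hb : b 0 ≠ 0) : C (b 0) * phat a b 1 = X - C (a 0) := by
  rw [phat, ← mul_assoc, ← C_mul, mul_inv_cancel₀ hb, C_1, one_mul]

theorem C_mul_phat_add_two {j : ℕ} (hb : b (j + 1) ≠ 0) :
    C (b (j + 1)) * phat a b (j + 2) =
      (X - C (a (j + 1))) * phat a b (j + 1) - C (b j) * phat a b j := by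
  rw [phat, ← mul_assoc, ← C_mul, mul_inv_cancel₀ hb, C_1, one_mul]

theorem isJacobiSolution_eval_phat (hb : ∀ j < n, b j ≠ 0) (x : ℝ) :
    IsJacobiSolution (x * ·) a b n fun j => eval x (phat a b j) := by
  refine ⟨fun hn => ?_, fun j hj => ?_⟩
  · simpa [sub_mul] using congrArg (eval x) (C_mul_phat_one (a := a) (hb 0 hn))
  · simpa [sub_mul] using congrArg (eval x) (C_mul_phat_add_two (a := a) (hb (j + 1) hj))

theorem natDegree_phat_and_leadingCoeff_pos (hb : ∀ j < n, 0 < b j) :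
    (phat a b n).natDegree = n ∧ 0 < (phat a b n).leadingCoeff := by
  induction n using Nat.twoStepInduction with
  | zero => simp
  | one =>
    have hc : 0 < (b 0)⁻¹ := inv_pos.2 (hb 0 one_pos)
    refine ⟨by rw [phat, natDegree_C_mul hc.ne', natDegree_X_sub_C], ?_⟩
    rwa [phat, leadingCoeff_mul, leadingCoeff_C, leadingCoeff_X_sub_C, mul_one]
  | more j ih₀ ih₁ =>
    obtain ⟨hd₁, hl₁⟩ := ih₁ fun i hi => hb i (by omega)
    have hd₀ := (ih₀ fun i hi => hb i (by omega)).1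
    have hc : 0 < (b (j + 1))⁻¹ := inv_pos.2 (hb (j + 1) (by omega))
    have hq : ((X - C (a (j + 1))) * phat a b (j + 1)).natDegree = j + 2 := by
      rw [natDegree_mul (X_sub_C_ne_zero _) (leadingCoeff_ne_zero.mp hl₁.ne'), natDegree_X_sub_C,
        hd₁, add_comm]
    have hr : (C (b j) * phat a b j).natDegree <
        ((X - C (a (j + 1))) * phat a b (j + 1)).natDegree := by
      rw [hq]
      exact (natDegree_C_mul_le _ _).trans_lt (by omega)
    refine ⟨?_, ?_⟩
    · rw [phat, natDegree_C_mul hc.ne', natDegree_sub_eq_left_of_natDegree_lt hr, hq]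
    · rw [phat, leadingCoeff_mul, leadingCoeff_C, leadingCoeff_sub_of_degree_lt
        (degree_lt_degree hr), leadingCoeff_mul, leadingCoeff_X_sub_C, one_mul]
      exact mul_pos hc hl₁

noncomputable def christoffelDarbouxKernel (a b : ℕ → ℝ) (N : ℕ) (x y : ℝ) : ℝ :=
  ∑ j ∈ range (N + 1), eval x (phat a b j) * eval y (phat a b j)

theorem one_le_christoffelDarbouxKernel_self (x : ℝ) :
    1 ≤ christoffelDarbouxKernel a b N x x := by
  rw [christoffelDarbouxKernel, sum_range_succ']
  simp only [phat_zero, eval_one, mul_one, le_add_iff_nonneg_left]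
  exact sum_nonneg fun j _ => mul_self_nonneg _

theorem christoffelDarbouxKernel_eq_zero (hb : ∀ j ≤ N, b j ≠ 0) {x y : ℝ}
    (hx : eval x (phat a b (N + 1)) = 0) (hy : eval y (phat a b (N + 1)) = 0) (hxy : x ≠ y) :
    christoffelDarbouxKernel a b N x y = 0 := by
  have hb' : ∀ j < N + 1, b j ≠ 0 := fun j hj => hb j (by omega)
  have hcd := (isJacobiSolution_eval_phat (a := a) hb' x).sub_mul_sum_mul
    (isJacobiSolution_eval_phat hb' y)
  rw [hx, hy] at hcd
  simpa [christoffelDarbouxKernel, sub_ne_zero.mpr hxy] using hcd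

theorem sum_phat_sq (hb : ∀ j ≤ n, b j ≠ 0) :
    ∑ j ∈ range (n + 1), phat a b j ^ 2 =
      C (b n) * (derivative (phat a b (n + 1)) * phat a b n -
        derivative (phat a b n) * phat a b (n + 1)) := by
  induction n with
  | zero =>
    have h := C_mul_phat_one (a := a) (hb 0 le_rfl)
    have h' := congrArg derivative h
    simp only [derivative_mul, derivative_C, zero_mul, zero_add, derivative_sub, derivative_X,
      sub_zero] at h'
    simp only [zero_add, range_one, sum_singleton, phat_zero, derivative_one]
    linear_combination -h'
  | succ n ih =>
    have h := C_mul_phat_add_two (a := a) (hb (n + 1) le_rfl)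
    have h' := congrArg derivative h
    simp only [derivative_mul, derivative_C, zero_mul, zero_add, derivative_sub, derivative_X,
      sub_zero, one_mul] at h'
    rw [sum_range_succ, ih fun j hj => hb j (by omega)]
    linear_combination derivative (phat a b (n + 1)) * h - phat a b (n + 1) * h'

theorem christoffelDarbouxKernel_self (hb : ∀ j ≤ N, b j ≠ 0) (x : ℝ) :
    christoffelDarbouxKernel a b N x x =
      b N * (eval x (derivative (phat a b (N + 1))) * eval x (phat a b N) -
        eval x (derivative (phat a b N)) * eval x (phat a b (N + 1))) := by
  simpa [christoffelDarbouxKernel, eval_finsetSum, sq] using congrArg (eval x) (sum_phat_sq hb)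

end Phat

theorem eval_derivative_eq_leadingCoeff_mul_prod {m : ℕ} {p : ℝ[X]} {lam : Fin m → ℝ}
    (hlam : Function.Injective lam) (hdeg : p.natDegree = m) (hroot : ∀ k, p.eval (lam k) = 0)
    (k : Fin m) :
    eval (lam k) (derivative p) = p.leadingCoeff * ∏ j ∈ univ.erase k, (lam k - lam j) := by
  classical
  have hp : p ≠ 0 := by
    rintro rfl
    subst hdeg
    exact k.elim0
  have hroots : univ.val.map lam = p.roots := by
    refine Multiset.eq_of_le_of_card_le ?_ (by simpa [hdeg] using card_roots' p)
    refine (Multiset.le_iff_subset (univ.nodup.map hlam)).mpr fun x hx => ?_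
    obtain ⟨j, -, rfl⟩ := Multiset.mem_map.mp hx
    exact (mem_roots hp).mpr (hroot j)
  have hsplit : C p.leadingCoeff * (p.roots.map fun x => X - C x).prod = p :=
    C_leadingCoeff_mul_prod_multiset_X_sub_C (by rw [← hroots, hdeg]; simp)
  conv_lhs => rw [← hsplit]
  rw [derivative_C_mul, eval_C_mul, eval_multiset_prod_X_sub_C_derivative
    (hroots ▸ Multiset.mem_map_of_mem lam (mem_univ k)), ← hroots,
    ← Multiset.map_erase lam hlam, Multiset.map_map]
  rfl

theorem neg_one_pow_mul_prod_sub_pos {N : ℕ} {lam : Fin (N + 1) → ℝ} (hlam : StrictMono lam)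
    (k : Fin (N + 1)) : 0 < (-1) ^ (N - k : ℕ) * ∏ j ∈ univ.erase k, (lam k - lam j) := by
  classical
  have hsplit : univ.erase k = (Ioi k).disjUnion (Iio k) (disjoint_Ioi_Iio k) := by
    rw [Ioi_disjUnion_Iio, compl_singleton]
  have hIoi : ∏ j ∈ Ioi k, (lam k - lam j) =
      (-1) ^ (N - k : ℕ) * ∏ j ∈ Ioi k, (lam j - lam k) := by
    rw [show N - (k : ℕ) = #(Ioi k) by simp [Fin.card_Ioi], ← prod_neg]
    simp only [neg_sub]
  have hIoi_pos : 0 < ∏ j ∈ Ioi k, (lam j - lam k) :=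
    prod_pos fun j hj => sub_pos.2 (hlam (mem_Ioi.1 hj))
  have hIio_pos : 0 < ∏ j ∈ Iio k, (lam k - lam j) :=
    prod_pos fun j hj => sub_pos.2 (hlam (mem_Iio.1 hj))
  rw [hsplit, prod_disjUnion, hIoi, ← mul_assoc, ← mul_assoc, ← pow_add,
    Even.neg_one_pow ⟨_, rfl⟩, one_mul]
  exact mul_pos hIoi_pos hIio_pos

def IsPersymmetric (N : ℕ) (a b : ℕ → ℝ) : Prop :=
  (∀ k ≤ N, a k = a (N - k)) ∧ ∀ n < N, b n = b (N - 1 - n)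

section Nodes

variable {a b : ℕ → ℝ} {N : ℕ} {lam : Fin (N + 1) → ℝ}

theorem neg_one_pow_mul_eval_phat_pos (hb : ∀ j ≤ N, 0 < b j) (hlam : StrictMono lam)
    (hzero : ∀ k, eval (lam k) (phat a b (N + 1)) = 0) (k : Fin (N + 1)) :
    0 < (-1) ^ (N + k : ℕ) * eval (lam k) (phat a b N) := by
  obtain ⟨hdeg, hlc⟩ :=
    natDegree_phat_and_leadingCoeff_pos (a := a) (n := N + 1) fun j hj => hb j (by omega)
  set D := eval (lam k) (derivative (phat a b (N + 1))) with hDdef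
  have hD : 0 < (-1) ^ (N - k : ℕ) * D := by
    rw [hDdef, eval_derivative_eq_leadingCoeff_mul_prod hlam.injective hdeg hzero k, mul_left_comm]
    exact mul_pos hlc (neg_one_pow_mul_prod_sub_pos hlam k)
  have hDP : 0 < D * eval (lam k) (phat a b N) := by
    have hK := christoffelDarbouxKernel_self (a := a) (fun j hj => (hb j hj).ne') (lam k)
    rw [hzero k, mul_zero, sub_zero] at hK
    refine pos_of_mul_pos_right ?_ (hb N le_rfl).le
    exact hK ▸ one_pos.trans_le (one_le_christoffelDarbouxKernel_self _)
  have hpar : (-1 : ℝ) ^ (N + k : ℕ) = (-1) ^ (N - k : ℕ) := by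
    rw [show N + (k : ℕ) = N - k + 2 * k by omega, pow_add, pow_mul]
    norm_num
  have hprod := mul_pos hD hDP
  rw [show (-1) ^ (N - k : ℕ) * D * (D * eval (lam k) (phat a b N)) =
    (-1) ^ (N - k : ℕ) * eval (lam k) (phat a b N) * D ^ 2 by ring] at hprod
  rw [hpar]
  exact pos_of_mul_pos_left hprod (sq_nonneg D)

theorem sum_eval_phat_mul_eval_phat (hb : ∀ j ≤ N, b j ≠ 0) (hlam : Function.Injective lam)
    (hzero : ∀ k, eval (lam k) (phat a b (N + 1)) = 0) (i j : Fin (N + 1)) :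
    ∑ k, (√(christoffelDarbouxKernel a b N (lam k) (lam k)))⁻¹ * eval (lam k) (phat a b i) *
      ((√(christoffelDarbouxKernel a b N (lam k) (lam k)))⁻¹ * eval (lam k) (phat a b j)) =
      if i = j then 1 else 0 := by
  set w : Fin (N + 1) → ℝ := fun k => (√(christoffelDarbouxKernel a b N (lam k) (lam k)))⁻¹
  let M : Matrix (Fin (N + 1)) (Fin (N + 1)) ℝ := .of fun k j => w k * eval (lam k) (phat a b j)
  have hrows : M * M.transpose = 1 := by
    ext k l
    have hkl : (M * M.transpose) k l =
        w k * w l * christoffelDarbouxKernel a b N (lam k) (lam l) := by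
      simp only [Matrix.mul_apply, Matrix.transpose_apply, M, Matrix.of_apply,
        christoffelDarbouxKernel, mul_sum, ← Fin.sum_univ_eq_sum_range
          fun j => eval (lam k) (phat a b j) * eval (lam l) (phat a b j)]
      exact sum_congr rfl fun _ _ => by ring
    rw [hkl, Matrix.one_apply]
    split_ifs with h
    · subst h
      have hK := one_le_christoffelDarbouxKernel_self (a := a) (b := b) (N := N) (lam k)
      rw [← mul_inv, Real.mul_self_sqrt (by linarith), inv_mul_cancel₀ (by linarith)]
    · rw [christoffelDarbouxKernel_eq_zero hb (hzero k) (hzero l) (hlam.ne h), mul_zero]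
  simpa [Matrix.mul_apply, M, Matrix.one_apply] using
    congrArg (· i j) (mul_eq_one_comm.mp hrows)

theorem isPersymmetric_of_sq_eval_phat_eq_one (hb : ∀ j ≤ N, 0 < b j)
    (hlam : Function.Injective lam) (hzero : ∀ k, eval (lam k) (phat a b (N + 1)) = 0)
    (hsq : ∀ k, eval (lam k) (phat a b N) ^ 2 = 1) : IsPersymmetric N a b := by
  have hb₀ : ∀ j ≤ N, b j ≠ 0 := fun j hj => (hb j hj).ne'
  set w : Fin (N + 1) → ℝ := fun k => (√(christoffelDarbouxKernel a b N (lam k) (lam k)))⁻¹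
  set s : Fin (N + 1) → ℝ := fun k => eval (lam k) (phat a b N)
  let T : EuclideanSpace ℝ (Fin (N + 1)) → EuclideanSpace ℝ (Fin (N + 1)) :=
    fun v => WithLp.toLp 2 fun k => lam k * v k
  let p : ℕ → EuclideanSpace ℝ (Fin (N + 1)) :=
    fun j => WithLp.toLp 2 fun k => w k * eval (lam k) (phat a b j)
  let q : ℕ → EuclideanSpace ℝ (Fin (N + 1)) :=
    fun j => WithLp.toLp 2 fun k => s k * w k * eval (lam k) (phat a b (N - j))
  have hp : IsJacobiSolution T a b N p := isJacobiSolution_toLp fun k =>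
    (isJacobiSolution_eval_phat (fun j hj => hb₀ j hj.le) (lam k)).const_mul (w k)
  have hq : IsJacobiSolution T (fun j => a (N - j)) (fun j => b (N - 1 - j)) N q :=
    isJacobiSolution_toLp fun k =>
      ((isJacobiSolution_eval_phat (n := N + 1) (fun j hj => hb₀ j (by omega)) (lam k)).const_mul
        (s k * w k)).reverse (by simp [hzero k])
  have hpo : Orthonormal ℝ fun i : Fin (N + 1) => p i :=
    orthonormal_toLp_iff.mpr (sum_eval_phat_mul_eval_phat hb₀ hlam hzero)
  have hqo : Orthonormal ℝ fun i : Fin (N + 1) => q i := by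
    refine orthonormal_toLp_iff.mpr fun i j => ?_
    have hrev := sum_eval_phat_mul_eval_phat hb₀ hlam hzero i.rev j.rev
    simp only [Fin.val_rev, Fin.rev_inj, Nat.add_sub_add_right] at hrev
    rw [← hrev]
    refine sum_congr rfl fun k _ => ?_
    linear_combination (w k * eval (lam k) (phat a b (N - i)) *
      (w k * eval (lam k) (phat a b (N - j)))) * hsq k
  have h0 : p 0 = q 0 := by
    ext k
    simp only [p, q, phat_zero, eval_one, Nat.sub_zero, s]
    linear_combination -(w k) * hsq k
  obtain ⟨ha, hb'⟩ := hp.coeff_eq_of_orthonormal hq hpo hqo (fun j hj => hb j hj.le)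
    (fun j hj => hb _ (by omega)) h0
  refine ⟨fun k hk => ?_, hb'⟩
  rcases hk.lt_or_eq with hk | rfl
  · exact ha k hk
  · rcases Nat.eq_zero_or_pos k with rfl | hk0
    · rfl
    · simpa using (ha 0 hk0).symm

theorem sq_eval_phat_eq_one_of_isPersymmetric (hb : ∀ j ≤ N, b j ≠ 0) {x : ℝ}
    (hx : eval x (phat a b (N + 1)) = 0) (h : IsPersymmetric N a b) :
    eval x (phat a b N) ^ 2 = 1 := by
  have hsol := isJacobiSolution_eval_phat (a := a) (n := N + 1) (fun j hj => hb j (by omega)) x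
  have hrev := (hsol.reverse hx).congr_coeff (fun j hj => (h.1 j hj.le).symm)
    fun j hj => (h.2 j hj).symm
  have hN := hrev.eq_of_apply_zero_eq ((hsol.mono (by omega)).const_mul (eval x (phat a b N)))
    (fun j hj => hb j hj.le) (by simp) N le_rfl
  simpa [sq] using hN.symm

end Nodes

theorem eq_neg_one_pow_iff_sq_eq_one {y : ℝ} {m : ℕ} (h : 0 < (-1) ^ m * y) :
    y = (-1) ^ m ↔ y ^ 2 = 1 := by
  rcases neg_one_pow_eq_or ℝ m with hm | hm <;> rw [hm] at h ⊢ <;>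
    constructor <;> intro hy <;> nlinarith

/-- Let `λ_0 < ... < λ_N` be the zeros of `P̂_{N+1}` (the eigenvalues of the Jacobi
    matrix `H_{[0,N]}` with diagonal `a` and positive off-diagonal `b`). Then
    `P̂_N(λ_k) = (-1)^{N+k}` for all `k` iff `H_{[0,N]}` is persymmetric (mirror
    symmetric), i.e. `a_k = a_{N-k}` for all `k ≤ N` and `b_n = b_{N-1-n}` for all
    `n < N`. -/
theorem stmt_18 (N : ℕ) (a b : ℕ → ℝ)
    (hb : ∀ j < N, 0 < b j) (hbN : b N = 1)
    (lam : Fin (N + 1) → ℝ) (hmono : StrictMono lam)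
    (hzero : ∀ k : Fin (N + 1), (phat a b (N + 1)).eval (lam k) = 0) :
    (∀ k : Fin (N + 1), (phat a b N).eval (lam k) = (-1) ^ (N + (k : ℕ))) ↔
      ((∀ k ≤ N, a k = a (N - k)) ∧ (∀ n < N, b n = b (N - 1 - n))) := by
  have hbpos : ∀ j ≤ N, 0 < b j := fun j hj =>
    hj.lt_or_eq.elim (hb j) fun h => h ▸ hbN ▸ one_pos
  simp only [fun k =>
    eq_neg_one_pow_iff_sq_eq_one (neg_one_pow_mul_eval_phat_pos hbpos hmono hzero k)]
  exact ⟨isPersymmetric_of_sq_eval_phat_eq_one hbpos hmono.injective hzero,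
    fun h k => sq_eval_phat_eq_one_of_isPersymmetric (fun j hj => (hbpos j hj).ne') (hzero k) h⟩
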